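/- arXiv:1208.5631 — 5 statements merged into one kernel-verified Lean document; each statement's English description precedes it below -/
import Mathlib

section
/- The union of countably many sets of reals each having the Hurewicz property has the Hurewicz property (σ-additivity of the Hurewicz property). -/
open Filter

/-- The Menger property for a set of reals (relative open covers). -/
def MengerSet (S : Set ℝ) : Prop :=
  ∀ U : ℕ → Set (Set ℝ), (∀ n, (∀ u ∈ U n, IsOpen u) ∧ S ⊆ ⋃₀ U n) →
    ∃ F : ℕ → Finset (Set ℝ), (∀ n, ↑(F n) ⊆ U n) ∧
      S ⊆ ⋃ n, ⋃₀ (F n : Set (Set ℝ))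

/-- The Hurewicz property for a set of reals (relative open covers). -/
def HurewiczSet (S : Set ℝ) : Prop :=
  ∀ U : ℕ → Set (Set ℝ), (∀ n, (∀ u ∈ U n, IsOpen u) ∧ S ⊆ ⋃₀ U n) →
    ∃ F : ℕ → Finset (Set ℝ), (∀ n, ↑(F n) ⊆ U n) ∧
      ∀ x ∈ S, ∀ᶠ n in atTop, x ∈ ⋃₀ (F n : Set (Set ℝ))

/-- Rothberger's property for a set of reals. -/
def RothbergerSet (S : Set ℝ) : Prop :=
  ∀ U : ℕ → Set (Set ℝ), (∀ n, (∀ u ∈ U n, IsOpen u) ∧ S ⊆ ⋃₀ U n) →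
    ∃ f : ℕ → Set ℝ, (∀ n, f n ∈ U n) ∧ S ⊆ ⋃ n, f n

/-- Strong measure zero: for every sequence of positive lengths there is a cover by
intervals of those lengths. -/
def StrongMeasureZero (S : Set ℝ) : Prop :=
  ∀ ε : ℕ → ℝ, (∀ n, 0 < ε n) →
    ∃ c : ℕ → ℝ, S ⊆ ⋃ n, Metric.closedBall (c n) (ε n / 2)

/-- σ-additivity of the Hurewicz property. -/
theorem hurewicz_iUnion (X : ℕ → Set ℝ) (hX : ∀ n, HurewiczSet (X n)) :
    HurewiczSet (⋃ n, X n) := by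
  intro U hU
  have hUk : ∀ k, ∃ F : ℕ → Finset (Set ℝ), (∀ n, ↑(F n) ⊆ U n) ∧
      ∀ x ∈ X k, ∀ᶠ n in atTop, x ∈ ⋃₀ (F n : Set (Set ℝ)) := by
    intro k
    exact hX k U (fun n => ⟨(hU n).1, (Set.subset_iUnion X k).trans (hU n).2⟩)
  classical
  choose F hF hFx using hUk
  refine ⟨fun n => (Finset.range (n+1)).biUnion (fun k => F k n), ?_, ?_⟩
  · intro n u hu
    simp only [Finset.coe_biUnion, Set.mem_iUnion, Finset.mem_coe, Finset.mem_biUnion] at hu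
    obtain ⟨k, _, hk⟩ := hu
    exact hF k n hk
  · intro x hx
    obtain ⟨k, hk⟩ := Set.mem_iUnion.mp hx
    filter_upwards [hFx k x hk, eventually_ge_atTop k] with n hn hnk
    obtain ⟨u, hu, hxu⟩ := hn
    refine ⟨u, ?_, hxu⟩
    simp only [Finset.coe_biUnion, Set.mem_iUnion, Finset.mem_coe, Finset.mem_biUnion,
      Finset.mem_range]
    exact ⟨k, Nat.lt_succ_of_le hnk, hu⟩
end

section
/- A set of reals X is concentrated on a countable set D ⊆ X if and only if X \ U is countable for every open set U ⊇ D; and every set concentrated on a countable set has strong measure zero. -/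
open Filter

/-- `X` is concentrated on `D`: `X \ U` is countable for every open `U ⊇ D`. -/
def ConcentratedOn (X D : Set ℝ) : Prop :=
  ∀ U : Set ℝ, IsOpen U → D ⊆ U → (X \ U).Countable

/-- `X` is concentrated on `D` iff `X \ U` is countable for every open `U ⊇ D`;
and every set concentrated on a countable subset has strong measure zero. -/
theorem concentrated_iff_and_smz (X : Set ℝ) :
    (∀ D : Set ℝ, (ConcentratedOn X D ↔
        ∀ U : Set ℝ, IsOpen U → D ⊆ U → (X \ U).Countable)) ∧
    (∀ D : Set ℝ, D.Countable → D ⊆ X → ConcentratedOn X D →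
        StrongMeasureZero X) := by
  constructor
  · intro D; exact Iff.rfl
  · intro D hDc hDX hconc ε hε
    obtain ⟨f, hf⟩ := Set.countable_iff_exists_subset_range.mp hDc
    set U : Set ℝ := ⋃ n, Metric.ball (f n) (ε (2 * n) / 2) with hU
    have hUopen : IsOpen U := isOpen_iUnion fun n => Metric.isOpen_ball
    have hDU : D ⊆ U := by
      intro d hd
      obtain ⟨n, rfl⟩ := hf hd
      exact Set.mem_iUnion.mpr ⟨n, Metric.mem_ball_self (by linarith [hε (2 * n)])⟩
    obtain ⟨g, hg⟩ := Set.countable_iff_exists_subset_range.mp (hconc U hUopen hDU)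
    refine ⟨fun n => if n % 2 = 0 then f (n / 2) else g (n / 2), ?_⟩
    intro x hx
    by_cases hxU : x ∈ U
    · obtain ⟨m, hm⟩ := Set.mem_iUnion.mp hxU
      refine Set.mem_iUnion.mpr ⟨2 * m, ?_⟩
      have h0 : (2 * m) % 2 = 0 := by omega
      have h1 : (2 * m) / 2 = m := by omega
      simp only [h0, h1, if_true]
      exact Metric.ball_subset_closedBall hm
    · obtain ⟨m, hm⟩ := hg ⟨hx, hxU⟩
      refine Set.mem_iUnion.mpr ⟨2 * m + 1, ?_⟩
      have h0 : (2 * m + 1) % 2 ≠ 0 := by omega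
      have h1 : (2 * m + 1) / 2 = m := by omega
      simp only [h0, h1, if_false]
      rw [← hm]
      exact Metric.mem_closedBall_self (by linarith [hε (2 * m + 1)])
end

section
/- Starting from any subset A of a topological space, the operations of closure and complement, applied repeatedly in any order, generate at most 14 distinct sets (the Kuratowski 14-set theorem). -/
/-- closure-interior-closure-interior = closure-interior. -/
lemma kur_cici {X : Type u} [TopologicalSpace X] (s : Set X) :
    closure (interior (closure (interior s))) = closure (interior s) := by
  apply Set.Subset.antisymm
  · calc closure (interior (closure (interior s)))
        ⊆ closure (closure (interior s)) := closure_mono interior_subset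
      _ = closure (interior s) := closure_closure
  · exact closure_mono (interior_maximal subset_closure isOpen_interior)

/-- The key Kuratowski identity: ckckckc = ckc. -/
lemma kur_key {X : Type u} [TopologicalSpace X] (s : Set X) :
    closure (closure (closure (closure s)ᶜ)ᶜ)ᶜ = closure (closure s)ᶜ := by
  have htop : IsOpen (closure s)ᶜ := isClosed_closure.isOpen_compl
  have h1 : (closure (closure (closure s)ᶜ)ᶜ)ᶜ
      = interior (closure (closure s)ᶜ) := by
    rw [closure_compl, compl_compl]
  calc closure ((closure ((closure ((closure s)ᶜ))ᶜ))ᶜ)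
      = closure (interior (closure (closure s)ᶜ)) := by rw [h1]
    _ = closure (interior (closure (interior ((closure s)ᶜ)))) := by
        rw [htop.interior_eq]
    _ = closure (interior ((closure s)ᶜ)) := kur_cici _
    _ = closure ((closure s)ᶜ) := by rw [htop.interior_eq]

/-- The explicit 14-element Kuratowski family of `A`. -/
def kurFamily {X : Type u} [TopologicalSpace X] (A : Set X) : Set (Set X) :=
  {A, Aᶜ, closure A, (closure A)ᶜ, closure Aᶜ, (closure Aᶜ)ᶜ, closure (closure A)ᶜ, (closure (closure A)ᶜ)ᶜ, closure (closure Aᶜ)ᶜ, (closure (closure Aᶜ)ᶜ)ᶜ, closure (closure (closure A)ᶜ)ᶜ, (closure (closure (closure A)ᶜ)ᶜ)ᶜ, closure (closure (closure Aᶜ)ᶜ)ᶜ, (closure (closure (closure Aᶜ)ᶜ)ᶜ)ᶜ}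

lemma kurFamily_closure {X : Type u} [TopologicalSpace X] (A : Set X) {B : Set X}
    (h : B ∈ kurFamily A) : closure B ∈ kurFamily A := by
  simp only [kurFamily, Set.mem_insert_iff, Set.mem_singleton_iff] at h
  rcases h with rfl | rfl | rfl | rfl | rfl | rfl | rfl | rfl | rfl | rfl | rfl | rfl | rfl | rfl
  · simp only [kurFamily, Set.mem_insert_iff, Set.mem_singleton_iff]
    exact Or.inr (Or.inr (Or.inl trivial))
  · simp only [kurFamily, Set.mem_insert_iff, Set.mem_singleton_iff]
    exact Or.inr (Or.inr (Or.inr (Or.inr (Or.inl trivial))))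
  · rw [closure_closure]
    simp only [kurFamily, Set.mem_insert_iff, Set.mem_singleton_iff]
    exact Or.inr (Or.inr (Or.inl trivial))
  · simp only [kurFamily, Set.mem_insert_iff, Set.mem_singleton_iff]
    exact Or.inr (Or.inr (Or.inr (Or.inr (Or.inr (Or.inr (Or.inl trivial))))))
  · rw [closure_closure]
    simp only [kurFamily, Set.mem_insert_iff, Set.mem_singleton_iff]
    exact Or.inr (Or.inr (Or.inr (Or.inr (Or.inl trivial))))
  · simp only [kurFamily, Set.mem_insert_iff, Set.mem_singleton_iff]
    exact Or.inr (Or.inr (Or.inr (Or.inr (Or.inr (Or.inr (Or.inr (Or.inr (Or.inl trivial))))))))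
  · rw [closure_closure]
    simp only [kurFamily, Set.mem_insert_iff, Set.mem_singleton_iff]
    exact Or.inr (Or.inr (Or.inr (Or.inr (Or.inr (Or.inr (Or.inl trivial))))))
  · simp only [kurFamily, Set.mem_insert_iff, Set.mem_singleton_iff]
    exact Or.inr (Or.inr (Or.inr (Or.inr (Or.inr (Or.inr (Or.inr (Or.inr (Or.inr (Or.inr (Or.inl trivial))))))))))
  · rw [closure_closure]
    simp only [kurFamily, Set.mem_insert_iff, Set.mem_singleton_iff]
    exact Or.inr (Or.inr (Or.inr (Or.inr (Or.inr (Or.inr (Or.inr (Or.inr (Or.inl trivial))))))))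
  · simp only [kurFamily, Set.mem_insert_iff, Set.mem_singleton_iff]
    exact Or.inr (Or.inr (Or.inr (Or.inr (Or.inr (Or.inr (Or.inr (Or.inr (Or.inr (Or.inr (Or.inr (Or.inr (Or.inl trivial))))))))))))
  · rw [closure_closure]
    simp only [kurFamily, Set.mem_insert_iff, Set.mem_singleton_iff]
    exact Or.inr (Or.inr (Or.inr (Or.inr (Or.inr (Or.inr (Or.inr (Or.inr (Or.inr (Or.inr (Or.inl trivial))))))))))
  · rw [kur_key A]
    simp only [kurFamily, Set.mem_insert_iff, Set.mem_singleton_iff]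
    exact Or.inr (Or.inr (Or.inr (Or.inr (Or.inr (Or.inr (Or.inl trivial))))))
  · rw [closure_closure]
    simp only [kurFamily, Set.mem_insert_iff, Set.mem_singleton_iff]
    exact Or.inr (Or.inr (Or.inr (Or.inr (Or.inr (Or.inr (Or.inr (Or.inr (Or.inr (Or.inr (Or.inr (Or.inr (Or.inl trivial))))))))))))
  · rw [kur_key Aᶜ]
    simp only [kurFamily, Set.mem_insert_iff, Set.mem_singleton_iff]
    exact Or.inr (Or.inr (Or.inr (Or.inr (Or.inr (Or.inr (Or.inr (Or.inr (Or.inl trivial))))))))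

lemma kurFamily_compl {X : Type u} [TopologicalSpace X] (A : Set X) {B : Set X}
    (h : B ∈ kurFamily A) : Bᶜ ∈ kurFamily A := by
  simp only [kurFamily, Set.mem_insert_iff, Set.mem_singleton_iff] at h
  rcases h with rfl | rfl | rfl | rfl | rfl | rfl | rfl | rfl | rfl | rfl | rfl | rfl | rfl | rfl
  · simp only [kurFamily, Set.mem_insert_iff, Set.mem_singleton_iff]
    exact Or.inr (Or.inl trivial)
  · rw [compl_compl]
    simp only [kurFamily, Set.mem_insert_iff, Set.mem_singleton_iff]
    exact Or.inl trivial
  · simp only [kurFamily, Set.mem_insert_iff, Set.mem_singleton_iff]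
    exact Or.inr (Or.inr (Or.inr (Or.inl trivial)))
  · rw [compl_compl]
    simp only [kurFamily, Set.mem_insert_iff, Set.mem_singleton_iff]
    exact Or.inr (Or.inr (Or.inl trivial))
  · simp only [kurFamily, Set.mem_insert_iff, Set.mem_singleton_iff]
    exact Or.inr (Or.inr (Or.inr (Or.inr (Or.inr (Or.inl trivial)))))
  · rw [compl_compl]
    simp only [kurFamily, Set.mem_insert_iff, Set.mem_singleton_iff]
    exact Or.inr (Or.inr (Or.inr (Or.inr (Or.inl trivial))))
  · simp only [kurFamily, Set.mem_insert_iff, Set.mem_singleton_iff]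
    exact Or.inr (Or.inr (Or.inr (Or.inr (Or.inr (Or.inr (Or.inr (Or.inl trivial)))))))
  · rw [compl_compl]
    simp only [kurFamily, Set.mem_insert_iff, Set.mem_singleton_iff]
    exact Or.inr (Or.inr (Or.inr (Or.inr (Or.inr (Or.inr (Or.inl trivial))))))
  · simp only [kurFamily, Set.mem_insert_iff, Set.mem_singleton_iff]
    exact Or.inr (Or.inr (Or.inr (Or.inr (Or.inr (Or.inr (Or.inr (Or.inr (Or.inr (Or.inl trivial)))))))))
  · rw [compl_compl]
    simp only [kurFamily, Set.mem_insert_iff, Set.mem_singleton_iff]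
    exact Or.inr (Or.inr (Or.inr (Or.inr (Or.inr (Or.inr (Or.inr (Or.inr (Or.inl trivial))))))))
  · simp only [kurFamily, Set.mem_insert_iff, Set.mem_singleton_iff]
    exact Or.inr (Or.inr (Or.inr (Or.inr (Or.inr (Or.inr (Or.inr (Or.inr (Or.inr (Or.inr (Or.inr (Or.inl trivial)))))))))))
  · rw [compl_compl]
    simp only [kurFamily, Set.mem_insert_iff, Set.mem_singleton_iff]
    exact Or.inr (Or.inr (Or.inr (Or.inr (Or.inr (Or.inr (Or.inr (Or.inr (Or.inr (Or.inr (Or.inl trivial))))))))))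
  · simp only [kurFamily, Set.mem_insert_iff, Set.mem_singleton_iff]
    exact Or.inr (Or.inr (Or.inr (Or.inr (Or.inr (Or.inr (Or.inr (Or.inr (Or.inr (Or.inr (Or.inr (Or.inr (Or.inr (trivial)))))))))))))
  · rw [compl_compl]
    simp only [kurFamily, Set.mem_insert_iff, Set.mem_singleton_iff]
    exact Or.inr (Or.inr (Or.inr (Or.inr (Or.inr (Or.inr (Or.inr (Or.inr (Or.inr (Or.inr (Or.inr (Or.inr (Or.inl trivial))))))))))))

lemma kurFamily_finite {X : Type u} [TopologicalSpace X] (A : Set X) :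
    (kurFamily A).Finite := by
  rw [kurFamily]
  refine Set.Finite.insert _ ?_
  refine Set.Finite.insert _ ?_
  refine Set.Finite.insert _ ?_
  refine Set.Finite.insert _ ?_
  refine Set.Finite.insert _ ?_
  refine Set.Finite.insert _ ?_
  refine Set.Finite.insert _ ?_
  refine Set.Finite.insert _ ?_
  refine Set.Finite.insert _ ?_
  refine Set.Finite.insert _ ?_
  refine Set.Finite.insert _ ?_
  refine Set.Finite.insert _ ?_
  refine Set.Finite.insert _ ?_
  exact Set.finite_singleton _

lemma kurFamily_ncard {X : Type u} [TopologicalSpace X] (A : Set X) :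
    (kurFamily A).ncard ≤ 14 := by
  rw [kurFamily]
  refine (Set.ncard_insert_le _ _).trans (Nat.add_le_add_right ?_ 1)
  refine (Set.ncard_insert_le _ _).trans (Nat.add_le_add_right ?_ 1)
  refine (Set.ncard_insert_le _ _).trans (Nat.add_le_add_right ?_ 1)
  refine (Set.ncard_insert_le _ _).trans (Nat.add_le_add_right ?_ 1)
  refine (Set.ncard_insert_le _ _).trans (Nat.add_le_add_right ?_ 1)
  refine (Set.ncard_insert_le _ _).trans (Nat.add_le_add_right ?_ 1)
  refine (Set.ncard_insert_le _ _).trans (Nat.add_le_add_right ?_ 1)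
  refine (Set.ncard_insert_le _ _).trans (Nat.add_le_add_right ?_ 1)
  refine (Set.ncard_insert_le _ _).trans (Nat.add_le_add_right ?_ 1)
  refine (Set.ncard_insert_le _ _).trans (Nat.add_le_add_right ?_ 1)
  refine (Set.ncard_insert_le _ _).trans (Nat.add_le_add_right ?_ 1)
  refine (Set.ncard_insert_le _ _).trans (Nat.add_le_add_right ?_ 1)
  refine (Set.ncard_insert_le _ _).trans (Nat.add_le_add_right ?_ 1)
  simp

/-- The family of sets obtainable from `A` by iterating closure and complement. -/
inductive KuratowskiGen {X : Type u} [TopologicalSpace X] (A : Set X) : Set X → Prop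
  | base : KuratowskiGen A A
  | closure (B : Set X) : KuratowskiGen A B → KuratowskiGen A (closure B)
  | compl (B : Set X) : KuratowskiGen A B → KuratowskiGen A Bᶜ

/-- Kuratowski's 14-set theorem: closure and complement generate at most 14 distinct
sets from any given set. -/
theorem kuratowski_fourteen {X : Type u} [TopologicalSpace X] (A : Set X) :
    { B : Set X | KuratowskiGen A B }.Finite ∧
    { B : Set X | KuratowskiGen A B }.ncard ≤ 14 := by
  have hsub : { B : Set X | KuratowskiGen A B } ⊆ kurFamily A := by
    intro B hB
    induction hB with
    | base =>
      simp only [kurFamily, Set.mem_insert_iff, Set.mem_singleton_iff]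
      exact Or.inl trivial
    | closure B hB ih => exact kurFamily_closure A ih
    | compl B hB ih => exact kurFamily_compl A ih
  exact ⟨(kurFamily_finite A).subset hsub,
    le_trans (Set.ncard_le_ncard hsub (kurFamily_finite A)) (kurFamily_ncard A)⟩
end

section
/- Every set of reals with Rothberger's property has strong measure zero. -/
open Filter

/-- Every set of reals with Rothberger's property has strong measure zero. -/
theorem smz_of_rothberger (S : Set ℝ) (hS : RothbergerSet S) :
    StrongMeasureZero S := by
  intro ε hε
  have h : ∀ n, (∀ u ∈ {u | ∃ c : ℝ, u = Metric.ball c (ε n / 2)}, IsOpen u) ∧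
      S ⊆ ⋃₀ {u | ∃ c : ℝ, u = Metric.ball c (ε n / 2)} := by
    intro n
    constructor
    · rintro u ⟨c, rfl⟩; exact Metric.isOpen_ball
    · intro x _
      exact ⟨Metric.ball x (ε n / 2), ⟨x, rfl⟩, Metric.mem_ball_self (half_pos (hε n))⟩
  obtain ⟨f, hf, hcov⟩ := hS _ h
  choose c hc using hf
  refine ⟨c, hcov.trans (Set.iUnion_mono fun n => ?_)⟩
  rw [hc n]
  exact Metric.ball_subset_closedBall
end

section
/- In ZFC one can prove: ω₁ × ω₁ can be covered by countably many sets each of which is the graph of a function ω₁ → ω₁ or the inverse of such a graph; equivalently, if |X| ≤ ℵ₁ then X² is a countable union of graphs of functions and inverses of graphs of functions. -/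
open Cardinal

/-- Sierpiński: if `|X| ≤ ℵ₁`, then `X × X` is a countable union of sets, each of which
is the graph of a partial function `X → X` or the inverse of such a graph. -/
theorem square_eq_countable_union_of_graphs (X : Type u) (hX : #X ≤ aleph 1) :
    ∃ G : ℕ → Set (X × X),
      (∀ n, ∀ p ∈ G n, ∀ q ∈ G n, p.1 = q.1 → p.2 = q.2) ∧
      (Set.univ : Set (X × X)) = ⋃ n, (G n ∪ Prod.swap ⁻¹' G n) := by
  -- Embed X into the canonical well-order of type ω₁
  have hcard : #X ≤ #((aleph 1).ord.ToType) := by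
    rw [Cardinal.mk_ord_toType]; exact hX
  obtain ⟨f⟩ := (Cardinal.le_def _ _).1 hcard
  -- For each a, the set of y with f y ≤ f a is countable
  have hcnt : ∀ a : X, ({y : X | f y ≤ f a}).Countable := by
    intro a
    have h1 : ({y : X | f y < f a}).Countable := by
      rw [Cardinal.countable_iff_lt_aleph_one]
      have hinj : #({y : X | f y < f a}) ≤ #(Set.Iio (f a)) := by
        refine Cardinal.mk_le_of_injective (f := fun y => (⟨f y.1, y.2⟩ : Set.Iio (f a))) ?_
        intro y z h
        simp only [Subtype.mk.injEq] at h
        exact Subtype.ext (f.injective (congrArg Subtype.val h))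
      exact hinj.trans_lt (Cardinal.mk_Iio_ord_toType (f a))
    have hsub : {y : X | f y ≤ f a} ⊆ insert a {y : X | f y < f a} := by
      intro y hy
      have hy' : f y ≤ f a := hy
      rcases hy'.lt_or_eq with h | h
      · exact Or.inr h
      · exact Or.inl (f.injective h)
    exact (h1.insert a).mono hsub
  -- Choose for each a an enumeration of its predecessors
  have henum : ∀ a : X, ∃ e : ℕ → X, ∀ b, f b ≤ f a → ∃ n, e n = b := by
    intro a
    obtain ⟨g, hg⟩ := (hcnt a).exists_eq_range ⟨a, le_refl (f a)⟩
    exact ⟨g, fun b hb => by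
      have : b ∈ Set.range g := hg ▸ hb
      obtain ⟨n, hn⟩ := this
      exact ⟨n, hn⟩⟩
  choose e he using henum
  refine ⟨fun n => {p : X × X | e p.1 n = p.2}, ?_, ?_⟩
  · intro n p hp q hq h
    simp only [Set.mem_setOf_eq] at hp hq
    rw [← hp, ← hq, h]
  · ext ⟨a, b⟩
    simp only [Set.mem_univ, true_iff, Set.mem_iUnion, Set.mem_union, Set.mem_preimage,
      Set.mem_setOf_eq, Prod.swap]
    rcases le_total (f b) (f a) with h | h
    · obtain ⟨n, hn⟩ := he a b h
      exact ⟨n, Or.inl hn⟩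
    · obtain ⟨n, hn⟩ := he b a h
      exact ⟨n, Or.inr hn⟩
end
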